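/- Let φ : B → B(H) be a unital completely positive map and P ∈ B(H) an orthogonal projection such that Pφ(t)P = ρ(t)P for all t ∈ B, where ρ : B → B(PH) is a *-representation (compressed picture). Then P is invariant: (I − P)φ(t)P = 0 for every t ∈ B. -/

import Mathlib

/-!
Complete positivity makes `φ` star-preserving and gives the Kadison–Schwarz inequality
`φ(t)* φ(t) ≤ φ(t* t)`. With `x = (1 - P) φ(t) P` and multiplicativity of the compression,
`x* x = P φ(t)* φ(t) P - P φ(t)* P φ(t) P ≤ P φ(t* t) P - P φ(t* t) P = 0`,
so `x* x = 0` and hence `x = 0` by the C*-identity.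
-/

/-- A linear map `φ` from a C*-algebra into `B(H)` is completely positive if all the
operator matrices `(φ(b_i* b_j))_{ij}` are positive, expressed via quadratic forms. -/
def IsCompletelyPositive {B H : Type*} [NormedRing B] [StarRing B] [CStarRing B]
    [NormedAlgebra ℂ B] [StarModule ℂ B] [CompleteSpace B]
    [NormedAddCommGroup H] [InnerProductSpace ℂ H] [CompleteSpace H]
    (φ : B →L[ℂ] (H →L[ℂ] H)) : Prop :=
  ∀ (n : ℕ) (b : Fin n → B) (d : Fin n → (H →L[ℂ] H)),
    0 ≤ ∑ i, ∑ j, star (d i) * φ (star (b i) * b j) * d j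

theorem IsStarProjection.one_sub_mul_mul_eq_zero_of_le {A : Type*} [NormedRing A] [StarRing A]
    [CStarRing A] [PartialOrder A] [StarOrderedRing A] {p a : A} (hp : IsStarProjection p)
    (h : p * star a * a * p ≤ p * star a * p * a * p) :
    (1 - p) * a * p = 0 := by
  have hq : (1 - p) * (1 - p) = 1 - p := hp.isIdempotentElem.one_sub
  have hnorm : star ((1 - p) * a * p) * ((1 - p) * a * p)
      = p * star a * a * p - p * star a * p * a * p := by
    calc star ((1 - p) * a * p) * ((1 - p) * a * p) = p * star a * ((1 - p) * (1 - p)) * a * p := by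
          simp only [star_mul, star_sub, star_one, hp.isSelfAdjoint.star_eq, mul_assoc]
      _ = _ := by rw [hq]; noncomm_ring
  rw [← CStarRing.star_mul_self_eq_zero_iff]
  exact le_antisymm (hnorm ▸ sub_nonpos.2 h) (star_mul_self_nonneg _)

theorem star_eq_of_forall_isSelfAdjoint {R : Type*} [Ring R] [StarRing R] [Module ℂ R]
    [StarModule ℂ R] [IsScalarTower ℂ R R] [SMulCommClass ℂ R R] {a x y d : R}
    (h : ∀ d₀ d₁ : R, IsSelfAdjoint
      (star d₀ * a * d₀ + star d₀ * x * d₁ + star d₁ * y * d₀ + star d₁ * d * d₁)) :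
    star y = x := by
  -- polarization: test the form at `(1, 1)` and at `(1, i)`
  have hsum : IsSelfAdjoint (x + y) := by
    convert ((h 1 1).sub (h 1 0)).sub (h 0 1) using 1
    simp only [star_one, star_zero, one_mul, mul_one, zero_mul, mul_zero, add_zero, zero_add]
    abel
  have hdiff : IsSelfAdjoint (Complex.I • (x - y)) := by
    convert ((h 1 (Complex.I • 1)).sub (h 1 0)).sub (h 0 (Complex.I • 1)) using 1
    simp only [star_one, star_zero, star_smul, Complex.star_def, Complex.conj_I, one_mul, mul_one,
      zero_mul, mul_zero, add_zero, zero_add, smul_mul_assoc, mul_smul_comm, smul_smul]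
    module
  have hstar_sum := hsum.star_eq
  have hstar_diff := hdiff.star_eq
  simp only [star_add, star_smul, star_sub, Complex.star_def, Complex.conj_I]
    at hstar_sum hstar_diff
  linear_combination (norm := skip) (1 / 2 : ℂ) • hstar_sum - (Complex.I / 2) • hstar_diff
  match_scalars <;> ring_nf <;> simp only [Complex.I_sq] <;> ring

namespace IsCompletelyPositive

variable {B H : Type*} [NormedRing B] [StarRing B] [CStarRing B]
    [NormedAlgebra ℂ B] [StarModule ℂ B] [CompleteSpace B]
    [NormedAddCommGroup H] [InnerProductSpace ℂ H] [CompleteSpace H]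
    {φ : B →L[ℂ] (H →L[ℂ] H)}

theorem map_star (hcp : IsCompletelyPositive φ) (t : B) : φ (star t) = star (φ t) := by
  have h : star (φ (star t)) = φ t := by
    refine star_eq_of_forall_isSelfAdjoint (a := φ 1) (d := φ (star t * t)) fun d₀ d₁ ↦ ?_
    refine IsSelfAdjoint.of_nonneg ?_
    simpa [Fin.sum_univ_two, add_assoc] using hcp 2 ![1, t] ![d₀, d₁]
  rw [← h, star_star]

theorem star_mul_self_le (hcp : IsCompletelyPositive φ) (hu : φ 1 = 1) (t : B) :
    star (φ t) * φ t ≤ φ (star t * t) := by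
  simpa [Fin.sum_univ_two, hu, hcp.map_star] using hcp 2 ![1, t] ![-φ t, 1]

end IsCompletelyPositive

theorem stmt6_general {B H : Type*} [NormedRing B] [StarRing B] [CStarRing B]
    [NormedAlgebra ℂ B] [StarModule ℂ B] [CompleteSpace B]
    [NormedAddCommGroup H] [InnerProductSpace ℂ H] [CompleteSpace H]
    (φ : B →L[ℂ] (H →L[ℂ] H)) (hu : φ 1 = 1) (hcp : IsCompletelyPositive φ)
    (P : H →L[ℂ] H) (hPsa : star P = P) (hPidem : P * P = P)
    (hmul : ∀ s t : B, P * φ (s * t) * P = (P * φ s * P) * (P * φ t * P)) :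
    ∀ t : B, (1 - P) * φ t * P = 0 := by
  intro t
  have hP : IsStarProjection P := ⟨hPidem, hPsa⟩
  refine hP.one_sub_mul_mul_eq_zero_of_le ?_
  calc P * star (φ t) * φ t * P = star P * (star (φ t) * φ t) * P := by rw [hPsa, mul_assoc P]
    _ ≤ star P * φ (star t * t) * P :=
      star_left_conjugate_le_conjugate (hcp.star_mul_self_le hu t) P
    _ = P * star (φ t) * P * φ t * P := by
      rw [hPsa, hmul, hcp.map_star]
      simp only [mul_assoc, ← mul_assoc P P, hPidem]

/-- If `φ : B → B(H)` is a unital completely positive map, `P` an orthogonal projection such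
that the compression `t ↦ P φ(t) P` is a ⋆-representation on `PH` (multiplicative,
star-preserving and unital in the compressed sense), then `(I − P) φ(t) P = 0` for all `t`. -/
theorem stmt6 {B H : Type*} [NormedRing B] [StarRing B] [CStarRing B]
    [NormedAlgebra ℂ B] [StarModule ℂ B] [CompleteSpace B]
    [NormedAddCommGroup H] [InnerProductSpace ℂ H] [CompleteSpace H]
    (φ : B →L[ℂ] (H →L[ℂ] H)) (hu : φ 1 = 1) (hcp : IsCompletelyPositive φ)
    (P : H →L[ℂ] H) (hPsa : star P = P) (hPidem : P * P = P)
    (hmul : ∀ s t : B, P * φ (s * t) * P = (P * φ s * P) * (P * φ t * P))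
    (hstar : ∀ t : B, star (P * φ t * P) = P * φ (star t) * P)
    (hone : P * φ 1 * P = P) :
    ∀ t : B, (1 - P) * φ t * P = 0 :=
  stmt6_general φ hu hcp P hPsa hPidem hmul
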